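/- arXiv:2307.01333 — 7 statements merged into one kernel-verified Lean document; each statement's English description precedes it below -/
import Mathlib

section
/- Let n ≥ 3 be an integer, and for i = 1,…,n−2 define α_i = sin(πi/n)/sin(π(i+1)/n) and β_i = sin(π/n)/sin(π(i+1)/n). Then ∑_{i=1}^{n−2} (1/α_i + α_i + β_i²/α_i) = 2n·cos(π/n). -/
/-!
With `x = πi/n` and `y = π/n`, the `i`-th summand equals `2 cos y + 2 sin y (cot x - cot (x + y))`,
an identity equivalent to `sin² (x + y) + sin² x + sin² y = 2 sin x sin (x + y) cos y + 2 sin² y`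
(the law of cosines in the triangle with angles `x`, `y`, `π - x - y`). The cotangent part
telescopes to `2 sin y (cot y - cot (π - y)) = 4 cos y`, and the constant part contributes
`2 (n - 2) cos y`.
-/

open Real Finset

lemma sin_ratio_summand_eq (x y : ℝ) (hx : sin x ≠ 0) (hxy : sin (x + y) ≠ 0) :
    1 / (sin x / sin (x + y)) + sin x / sin (x + y) + (sin y / sin (x + y)) ^ 2 / (sin x / sin (x + y))
      = 2 * cos y + 2 * sin y * (cot x - cot (x + y)) := by
  have law_of_cosines : sin (x + y) ^ 2 + sin x ^ 2 + sin y ^ 2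
      = 2 * cos y * sin x * sin (x + y) + 2 * sin y * (cos x * sin (x + y) - cos (x + y) * sin x) := by
    rw [sin_add, cos_add]
    linear_combination (-sin x ^ 2) * sin_sq_add_cos_sq y - sin y ^ 2 * sin_sq_add_cos_sq x
  rw [cot_eq_cos_div_sin, cot_eq_cos_div_sin]
  field_simp
  linear_combination law_of_cosines

lemma cot_pi_sub (x : ℝ) : cot (π - x) = -cot x := by
  rw [cot_eq_cos_div_sin, cot_eq_cos_div_sin, sin_pi_sub, cos_pi_sub, neg_div]

lemma sin_pi_mul_div_pos {k n : ℕ} (hk : 0 < k) (hkn : k < n) : 0 < sin (π * k / n) := by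
  have hn : (0 : ℝ) < n := by exact_mod_cast hk.trans hkn
  apply sin_pos_of_pos_of_lt_pi (by positivity)
  rw [div_lt_iff₀ hn]
  exact mul_lt_mul_of_pos_left (by exact_mod_cast hkn) pi_pos

theorem lg_coeff_sum (n : ℕ) (hn : 3 ≤ n) :
    ∑ i ∈ Finset.Icc 1 (n - 2),
      (1 / (Real.sin (π * i / n) / Real.sin (π * (i + 1) / n)) +
        Real.sin (π * i / n) / Real.sin (π * (i + 1) / n) +
        (Real.sin (π / n) / Real.sin (π * (i + 1) / n)) ^ 2 /
          (Real.sin (π * i / n) / Real.sin (π * (i + 1) / n))) =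
      2 * n * Real.cos (π / n) := by
  set c : ℕ → ℝ := fun k ↦ cot (π * k / n) with hc
  have hsucc_arg : ∀ i : ℕ, π * ((i + 1 : ℕ) : ℝ) / n = π * i / n + π / n := by
    intro i; push_cast; ring
  calc _ = ∑ i ∈ Icc 1 (n - 2), (2 * cos (π / n) - 2 * sin (π / n) * (c (i + 1) - c i)) := by
        refine sum_congr rfl fun i hi ↦ ?_
        obtain ⟨hi1, hin⟩ := mem_Icc.mp hi
        have hsucc := sin_pi_mul_div_pos (k := i + 1) (n := n) (by omega) (by omega)
        rw [hsucc_arg] at hsucc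
        rw [← Nat.cast_succ, hsucc_arg,
          sin_ratio_summand_eq _ _ (sin_pi_mul_div_pos hi1 (by omega)).ne' hsucc.ne']
        simp only [hc, hsucc_arg]
        ring
    _ = (n - 2) * (2 * cos (π / n)) - 2 * sin (π / n) * (c (n - 1) - c 1) := by
        rw [sum_sub_distrib, sum_const, ← mul_sum, sum_Icc_sub (by omega), Nat.card_Icc,
          nsmul_eq_mul, show n - 2 + 1 - 1 = n - 2 by omega, show n - 2 + 1 = n - 1 by omega,
          Nat.cast_sub (by omega)]
        push_cast
        ring
    _ = 2 * n * cos (π / n) := by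
        have hlast : π * ((n - 1 : ℕ) : ℝ) / n = π - π / n := by
          rw [Nat.cast_sub (by omega)]; field_simp; ring
        have hsin : sin (π / n) ≠ 0 := by
          simpa using (sin_pi_mul_div_pos (k := 1) (n := n) one_pos (by omega)).ne'
        simp only [hc, hlast, cot_pi_sub, Nat.cast_one, mul_one]
        rw [cot_eq_cos_div_sin]
        field_simp
        ring
end

section
/- Let n ≥ 3 and let A_1,…,A_n be Hermitian operators on a finite-dimensional complex Hilbert space with A_x² = 1 for all x. Define the Leggett–Garg operator L̂ = (1/2)∑_{x=1}^{n−1}{A_x, A_{x+1}} − (1/2){A_n, A_1}, where {·,·} is the anticommutator. Then L̂ ≤ n·cos(π/n)·1 in the Loewner (positive semidefinite) order. -/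
open Real Finset Matrix ComplexOrder

/-!
Let `ω_k = e^{(2k+1)πi/n}`, `k < n`, be the roots of `z^n = -1` and `B_k = ∑_{x=1}^n ω_k^x A_x`.
The characters `x ↦ ω_k^x` are orthogonal on `{1, …, n}`, so any two such transforms satisfy
`∑_k P̂_k^* Q̂_k = n ∑_x P_x^* Q_x`. Multiplying `B_k` by `ω̄_k` shifts the index by
one, and because `ω_k^n = -1` the term leaving the window comes back as `-A_1`: this is where the
sign of the wrap-around term of `L̂` comes from. Together these give the sum of squares
`n (n cos(π/n) - L̂) = ∑_k (cos(π/n) - cos((2k+1)π/n)) B_k^* B_k` with nonnegative weights.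
-/

theorem sum_conjTranspose_mul_of_orthogonal {ι κ R l m p : Type*} [Fintype l] [CommRing R]
    [StarRing R] [DecidableEq ι] (s : Finset ι) (t : Finset κ) (c : κ → ι → R) (N : R)
    (hc : ∀ x ∈ s, ∀ y ∈ s, ∑ k ∈ t, star (c k x) * c k y = if x = y then N else 0)
    (P : ι → Matrix l m R) (Q : ι → Matrix l p R) :
    ∑ k ∈ t, (∑ x ∈ s, c k x • P x)ᴴ * ∑ y ∈ s, c k y • Q y =
      N • ∑ x ∈ s, (P x)ᴴ * Q x := by
  have expand : ∀ k, (∑ x ∈ s, c k x • P x)ᴴ * ∑ y ∈ s, c k y • Q y =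
      ∑ x ∈ s, ∑ y ∈ s, (star (c k x) * c k y) • ((P x)ᴴ * Q y) := fun k => by
    rw [conjTranspose_sum, Matrix.sum_mul]
    refine sum_congr rfl fun x _ => ?_
    rw [Matrix.mul_sum]
    refine sum_congr rfl fun y _ => ?_
    rw [conjTranspose_smul, Matrix.smul_mul, Matrix.mul_smul, smul_smul]
  simp only [expand]
  rw [sum_comm, smul_sum]
  refine sum_congr rfl fun x hx => ?_
  rw [sum_comm]
  simp only [← sum_smul]
  rw [sum_congr rfl fun y hy => by rw [hc x hx y hy]]
  simp [ite_smul, hx]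

namespace IsPrimitiveRoot

theorem pow_half_eq_neg_one {K : Type*} [CommRing K] [IsDomain K] {ζ : K} {n : ℕ}
    (hζ : IsPrimitiveRoot ζ (2 * n)) (hn : n ≠ 0) : ζ ^ n = -1 :=
  (hζ.pow (by omega) (mul_comm 2 n)).eq_neg_one_of_two_right

theorem sum_pow_odd_pow_eq_zero {K : Type*} [CommRing K] [IsDomain K] {ζ : K} {n m : ℕ}
    (hζ : IsPrimitiveRoot ζ (2 * n)) (hm0 : m ≠ 0) (hmn : m < n) :
    ∑ k ∈ range n, (ζ ^ (2 * k + 1)) ^ m = 0 := by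
  have hz : IsPrimitiveRoot (ζ ^ 2) n := hζ.pow (by omega) rfl
  have hne : (ζ ^ 2) ^ m ≠ 1 := hz.pow_ne_one_of_pos_of_lt hm0 hmn
  have hgeom : ∑ k ∈ range n, ((ζ ^ 2) ^ m) ^ k = 0 := by
    refine (mul_eq_zero.mp ?_).resolve_left (sub_ne_zero.mpr hne)
    rw [mul_geom_sum, ← pow_mul, mul_comm, pow_mul, hz.pow_eq_one, one_pow, sub_self]
  calc ∑ k ∈ range n, (ζ ^ (2 * k + 1)) ^ m
      = ζ ^ m * ∑ k ∈ range n, ((ζ ^ 2) ^ m) ^ k := by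
        rw [mul_sum]; exact sum_congr rfl fun k _ => by ring
    _ = 0 := by rw [hgeom, mul_zero]

theorem sum_star_pow_odd_pow_mul_pow {ζ : ℂ} {n x y : ℕ} (hζ : IsPrimitiveRoot ζ (2 * n))
    (hxy : x < y + n) (hyx : y < x + n) :
    ∑ k ∈ range n, star ((ζ ^ (2 * k + 1)) ^ x) * (ζ ^ (2 * k + 1)) ^ y =
      if x = y then (n : ℂ) else 0 := by
  wlog hle : x ≤ y generalizing x y
  · rw [← star_inj, star_sum]
    simp only [star_mul, star_star, this hyx hxy (by omega), eq_comm (a := y)]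
    split_ifs <;> simp
  obtain ⟨m, rfl⟩ := Nat.exists_eq_add_of_le hle
  have hunit : ∀ k, star ((ζ ^ (2 * k + 1)) ^ x) * (ζ ^ (2 * k + 1)) ^ x = 1 := fun k => by
    rw [← pow_mul, Complex.star_def, Complex.conj_mul', norm_pow, hζ.norm'_eq_one (by omega),
      one_pow, Complex.ofReal_one, one_pow]
  rw [sum_congr rfl fun k _ => by rw [pow_add (ζ ^ (2 * k + 1)), ← mul_assoc, hunit, one_mul]]
  rcases Nat.eq_zero_or_pos m with rfl | hm
  · simp
  · rw [if_neg (by omega), hζ.sum_pow_odd_pow_eq_zero hm.ne' (by omega)]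

theorem sum_conjTranspose_mul_sum_odd_pow_smul {l m p : Type*} [Fintype l] {ζ : ℂ} {n : ℕ}
    (hζ : IsPrimitiveRoot ζ (2 * n)) (P : ℕ → Matrix l m ℂ) (Q : ℕ → Matrix l p ℂ) :
    ∑ k ∈ range n, (∑ x ∈ Icc 1 n, (ζ ^ (2 * k + 1)) ^ x • P x)ᴴ *
        ∑ y ∈ Icc 1 n, (ζ ^ (2 * k + 1)) ^ y • Q y =
      (n : ℂ) • ∑ x ∈ Icc 1 n, (P x)ᴴ * Q x :=
  sum_conjTranspose_mul_of_orthogonal _ _ _ _ (fun x hx y hy => by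
    simp only [mem_Icc] at hx hy
    exact hζ.sum_star_pow_odd_pow_mul_pow (by omega) (by omega)) P Q

end IsPrimitiveRoot

theorem isPrimitiveRoot_exp_pi_div_mul_I {n : ℕ} (hn : n ≠ 0) :
    IsPrimitiveRoot (Complex.exp (↑(π / n) * Complex.I)) (2 * n) := by
  convert Complex.isPrimitiveRoot_exp (2 * n) (by omega) using 2
  push_cast
  field_simp

theorem re_exp_pi_div_mul_I_pow (n j : ℕ) :
    (Complex.exp (↑(π / n) * Complex.I) ^ j).re = cos (j * π / n) := by
  rw [← Complex.exp_nat_mul,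
    show (j : ℂ) * (↑(π / n) * Complex.I) = ↑(j * π / n) * Complex.I by push_cast; ring,
    Complex.exp_ofReal_mul_I_re]

theorem cos_odd_mul_pi_div_le_cos_pi_div {n k : ℕ} (hk : k < n) :
    cos ((2 * k + 1) * π / n) ≤ cos (π / n) := by
  have hn : (0 : ℝ) < n := by exact_mod_cast hk.trans_le' (Nat.zero_le k)
  have hk' : (k : ℝ) + 1 ≤ n := by exact_mod_cast hk
  have hdist : |(2 * k + 1) * π / n - π| ≤ π - π / n := by
    rw [show (2 * k + 1) * π / n - π = (2 * k + 1 - n) * (π / n) by field_simp,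
      show π - π / n = (n - 1) * (π / n) by field_simp, abs_mul, abs_of_pos (div_pos pi_pos hn)]
    gcongr
    have := k.cast_nonneg (α := ℝ)
    exact abs_le.mpr ⟨by linarith, by linarith⟩
  have hle := cos_le_cos_of_nonneg_of_le_pi (abs_nonneg _) (sub_le_self π (by positivity)) hdist
  rw [cos_abs, cos_sub_pi, cos_pi_sub] at hle
  linarith

theorem ofReal_sub_re_smul_conjTranspose_mul_self {l m : Type*} [Fintype l] (c : ℝ) (ω : ℂ)
    (B : Matrix l m ℂ) :
    ((c - ω.re : ℝ) : ℂ) • (Bᴴ * B) =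
      (c : ℂ) • (Bᴴ * B) - (1 / 2 : ℂ) • ((star ω • B)ᴴ * B + Bᴴ * (star ω • B)) := by
  rw [conjTranspose_smul, star_star, Matrix.smul_mul, Matrix.mul_smul, ← add_smul, smul_smul,
    ← sub_smul, Complex.star_def, Complex.add_conj]
  push_cast
  ring_nf

theorem sum_Icc_one_add_one_of_eq {M : Type*} [AddCancelCommMonoid M] {n : ℕ} (f : ℕ → M)
    (h : f (n + 1) = f 1) : ∑ x ∈ Icc 1 n, f (x + 1) = ∑ x ∈ Icc 1 n, f x := by
  have hrange : ∀ g : ℕ → M, ∑ x ∈ Icc 1 n, g x = ∑ k ∈ range n, g (k + 1) := fun g => by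
    rw [← Ico_add_one_right_eq_Icc, sum_Ico_eq_sum_range, Nat.add_sub_cancel]
    simp only [add_comm 1]
  rw [hrange, hrange]
  have hsucc := (sum_range_succ' (fun k => f (k + 1)) n).symm.trans (sum_range_succ _ n)
  rw [h] at hsucc
  exact add_right_cancel hsucc

def antiperiodicExtension {G : Type*} [Neg G] (n : ℕ) (A : ℕ → G) (x : ℕ) : G :=
  if x = n + 1 then -A 1 else A x

theorem smul_sum_pow_smul_antiperiodicExtension {R M : Type*} [CommRing R] [AddCommGroup M]
    [Module R M] {ω : R} {n : ℕ} (hω : ω ^ n = -1) (A : ℕ → M) :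
    ω • ∑ x ∈ Icc 1 n, ω ^ x • antiperiodicExtension n A (x + 1) =
      ∑ x ∈ Icc 1 n, ω ^ x • A x := by
  rcases eq_or_ne n 0 with rfl | hn
  · simp
  have hwrap : ω ^ (n + 1) • antiperiodicExtension n A (n + 1) =
      ω ^ 1 • antiperiodicExtension n A 1 := by
    simp [antiperiodicExtension, hn, pow_succ, hω]
  rw [smul_sum]
  simp only [smul_smul, ← pow_succ']
  rw [sum_Icc_one_add_one_of_eq (fun x => ω ^ x • antiperiodicExtension n A x) hwrap]
  refine sum_congr rfl fun x hx => ?_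
  rw [antiperiodicExtension, if_neg (by have := (mem_Icc.mp hx).2; omega)]

theorem sum_anticommutator_antiperiodicExtension {R : Type*} [Ring R] {n : ℕ} (hn : n ≠ 0)
    (A : ℕ → R) :
    ∑ x ∈ Icc 1 n,
        (A x * antiperiodicExtension n A (x + 1) + antiperiodicExtension n A (x + 1) * A x) =
      ∑ x ∈ Icc 1 (n - 1), (A x * A (x + 1) + A (x + 1) * A x) - (A n * A 1 + A 1 * A n) := by
  obtain ⟨n, rfl⟩ := Nat.exists_eq_succ_of_ne_zero hn
  rw [sum_Icc_succ_top (by omega), Nat.succ_sub_one]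
  have hlow : ∀ x ∈ Icc 1 n, antiperiodicExtension (n + 1) A (x + 1) = A (x + 1) :=
    fun x hx => by rw [antiperiodicExtension, if_neg (by have := (mem_Icc.mp hx).2; omega)]
  rw [sum_congr rfl fun x hx => by rw [hlow x hx], antiperiodicExtension, if_pos rfl, mul_neg,
    neg_mul, ← neg_add, ← sub_eq_add_neg, Nat.succ_eq_add_one]

theorem isHermitian_antiperiodicExtension {m : Type*} {n x : ℕ} (hn : n ≠ 0)
    {A : ℕ → Matrix m m ℂ} (hherm : ∀ x, 1 ≤ x → x ≤ n → (A x).IsHermitian)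
    (hx1 : 1 ≤ x) (hxn : x ≤ n + 1) : (antiperiodicExtension n A x).IsHermitian := by
  rw [antiperiodicExtension]
  split_ifs
  · exact (hherm 1 le_rfl (by omega)).neg
  · exact hherm x hx1 (by omega)

section LeggettGarg

variable {m : Type*} [Fintype m] [DecidableEq m]

noncomputable def leggettGargOperator (n : ℕ) (A : ℕ → Matrix m m ℂ) : Matrix m m ℂ :=
  (1 / 2 : ℂ) • ∑ x ∈ Icc 1 (n - 1), (A x * A (x + 1) + A (x + 1) * A x) -
    (1 / 2 : ℂ) • (A n * A 1 + A 1 * A n)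

theorem smul_sub_leggettGargOperator_eq_sum {ζ : ℂ} {n : ℕ} (hζ : IsPrimitiveRoot ζ (2 * n))
    (A : ℕ → Matrix m m ℂ) (hherm : ∀ x, 1 ≤ x → x ≤ n → (A x).IsHermitian)
    (hinv : ∀ x, 1 ≤ x → x ≤ n → A x * A x = 1) (c : ℝ) :
    (n : ℂ) • (((n * c : ℝ) : ℂ) • 1 - leggettGargOperator n A) =
      ∑ k ∈ range n, ((c - (ζ ^ (2 * k + 1)).re : ℝ) : ℂ) •
        ((∑ x ∈ Icc 1 n, (ζ ^ (2 * k + 1)) ^ x • A x)ᴴ *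
          ∑ x ∈ Icc 1 n, (ζ ^ (2 * k + 1)) ^ x • A x) := by
  rcases eq_or_ne n 0 with rfl | hn
  · simp
  set A' := antiperiodicExtension n A
  have hshift : ∀ k, star (ζ ^ (2 * k + 1)) • ∑ x ∈ Icc 1 n, (ζ ^ (2 * k + 1)) ^ x • A x =
      ∑ x ∈ Icc 1 n, (ζ ^ (2 * k + 1)) ^ x • A' (x + 1) := fun k => by
    have hω : (ζ ^ (2 * k + 1)) ^ n = -1 := by
      rw [← pow_mul, mul_comm, pow_mul, hζ.pow_half_eq_neg_one hn,
        Odd.neg_one_pow (odd_two_mul_add_one k)]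
    have hunit : star (ζ ^ (2 * k + 1)) * ζ ^ (2 * k + 1) = 1 := by
      rw [Complex.star_def, Complex.conj_mul', norm_pow, hζ.norm'_eq_one (by omega), one_pow,
        Complex.ofReal_one, one_pow]
    rw [← smul_sum_pow_smul_antiperiodicExtension hω A, smul_smul, hunit, one_smul]
  have hA : ∀ x ∈ Icc 1 n, (A x)ᴴ = A x := fun x hx =>
    (hherm x (mem_Icc.mp hx).1 (mem_Icc.mp hx).2).eq
  have hA' : ∀ x ∈ Icc 1 n, (A' (x + 1))ᴴ = A' (x + 1) := fun x hx =>
    (isHermitian_antiperiodicExtension hn hherm (by omega) (by have := (mem_Icc.mp hx).2; omega)).eq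
  have hsq : ∑ x ∈ Icc 1 n, (A x)ᴴ * A x = (n : ℂ) • (1 : Matrix m m ℂ) := by
    rw [sum_congr rfl fun x hx => by rw [hA x hx, hinv x (mem_Icc.mp hx).1 (mem_Icc.mp hx).2],
      sum_const, Nat.card_Icc, Nat.add_sub_cancel, ← Nat.cast_smul_eq_nsmul ℂ]
  have hleft : ∑ x ∈ Icc 1 n, (A' (x + 1))ᴴ * A x = ∑ x ∈ Icc 1 n, A' (x + 1) * A x :=
    sum_congr rfl fun x hx => by rw [hA' x hx]
  have hright : ∑ x ∈ Icc 1 n, (A x)ᴴ * A' (x + 1) = ∑ x ∈ Icc 1 n, A x * A' (x + 1) :=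
    sum_congr rfl fun x hx => by rw [hA x hx]
  have hLG : leggettGargOperator n A =
      (1 / 2 : ℂ) • ∑ x ∈ Icc 1 n, (A x * A' (x + 1) + A' (x + 1) * A x) := by
    rw [sum_anticommutator_antiperiodicExtension hn, leggettGargOperator, smul_sub]
  simp only [ofReal_sub_re_smul_conjTranspose_mul_self, sum_sub_distrib, ← smul_sum,
    sum_add_distrib, hshift]
  simp only [hζ.sum_conjTranspose_mul_sum_odd_pow_smul]
  rw [hsq, hleft, hright, hLG, sum_add_distrib]
  push_cast
  module

end LeggettGarg

theorem lg_quantum_bound (n d : ℕ) (hn : 3 ≤ n)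
    (A : ℕ → Matrix (Fin d) (Fin d) ℂ)
    (hherm : ∀ x, 1 ≤ x → x ≤ n → (A x).IsHermitian)
    (hinv : ∀ x, 1 ≤ x → x ≤ n → A x * A x = 1) :
    (((n * Real.cos (π / n) : ℝ) : ℂ) • (1 : Matrix (Fin d) (Fin d) ℂ) -
      ((1 / 2 : ℂ) • ∑ x ∈ Finset.Icc 1 (n - 1), (A x * A (x + 1) + A (x + 1) * A x) -
        (1 / 2 : ℂ) • (A n * A 1 + A 1 * A n))).PosSemidef := by
  have hn0 : n ≠ 0 := by omega
  have hsos := smul_sub_leggettGargOperator_eq_sum (isPrimitiveRoot_exp_pi_div_mul_I hn0) A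
    hherm hinv (cos (π / n))
  have hpsd :
      ((n : ℂ) • (((n * cos (π / n) : ℝ) : ℂ) • 1 - leggettGargOperator n A)).PosSemidef := by
    rw [hsos]
    refine posSemidef_sum _ fun k hk => (posSemidef_conjTranspose_mul_self _).smul ?_
    rw [Complex.zero_le_real, re_exp_pi_div_mul_I_pow, sub_nonneg]
    exact_mod_cast cos_odd_mul_pi_div_le_cos_pi_div (mem_range.mp hk)
  have hinv_n : (0 : ℂ) ≤ ((n⁻¹ : ℝ) : ℂ) := Complex.zero_le_real.mpr (by positivity)
  convert hpsd.smul hinv_n using 1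
  rw [smul_smul, Complex.ofReal_inv, Complex.ofReal_natCast,
    inv_mul_cancel₀ (Nat.cast_ne_zero.mpr hn0), one_smul, leggettGargOperator]
end

section
/- Let n ≥ 3, let A_1,…,A_n be self-adjoint operators with A_x² = 1, and set α_i = sin(πi/n)/sin(π(i+1)/n), β_i = sin(π/n)/sin(π(i+1)/n), P_i = A_i − α_i A_{i+1} + β_i A_n. Then ∑_{i=1}^{n−2} (1/(2α_i)) P_i† P_i = (1/2)∑_{i=1}^{n−2}(1/α_i + α_i + β_i²/α_i)·1 − L̂, where L̂ = (1/2)∑_{x=1}^{n−1}{A_x, A_{x+1}} − (1/2){A_n, A_1}. -/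
open Real Finset Matrix

noncomputable def lgAlpha (n i : ℕ) : ℝ := Real.sin (π * i / n) / Real.sin (π * (i + 1) / n)
noncomputable def lgBeta (n i : ℕ) : ℝ := Real.sin (π / n) / Real.sin (π * (i + 1) / n)

lemma lg_key {R : Type*} [Ring R] [Algebra ℂ R] (a b : ℂ) (ha : a ≠ 0)
    (x y z : R) (hx : x*x = 1) (hy : y*y = 1) (hz : z*z = 1) :
    (1/(2*a)) • ((x - a•y + b•z) * (x - a•y + b•z)) =
      ((1/(2*a))*(1 + a^2 + b^2)) • (1:R) - (1/2 : ℂ)•(x*y+y*x) + (b/(2*a))•(x*z+z*x)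
        - (b/2)•(y*z+z*y) := by
  simp only [sub_mul, mul_sub, add_mul, mul_add, smul_smul, Algebra.mul_smul_comm,
    Algebra.smul_mul_assoc, hx, hy, hz, smul_sub, smul_add]
  match_scalars <;> field_simp <;> ring

lemma lg_sin_pos {n k : ℕ} (hk : 1 ≤ k) (hkn : k < n) : 0 < Real.sin (π * k / n) := by
  have hn0 : 0 < n := by omega
  have hn : (0:ℝ) < n := by exact_mod_cast hn0
  have hk' : (1:ℝ) ≤ k := by exact_mod_cast hk
  have hkn' : (k:ℝ) < n := by exact_mod_cast hkn
  apply Real.sin_pos_of_pos_of_lt_pi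
  · have := Real.pi_pos
    positivity
  · rw [div_lt_iff₀ hn]
    have := Real.pi_pos
    nlinarith

lemma lgAlpha_pos {n i : ℕ} (h1 : 1 ≤ i) (h2 : i + 1 < n) : 0 < lgAlpha n i := by
  have a := lg_sin_pos (n := n) h1 (by omega)
  have b := lg_sin_pos (n := n) (k := i+1) (by omega) h2
  rw [lgAlpha]
  push_cast at b ⊢
  exact div_pos a b

lemma lg_edge1 {n : ℕ} : lgBeta n 1 = lgAlpha n 1 := by
  simp [lgBeta, lgAlpha]

lemma lg_edge2 {n : ℕ} (hn : 3 ≤ n) : lgBeta n (n-2) = 1 := by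
  have hn' : (0:ℝ) < n := by positivity
  have s1 := lg_sin_pos (n:=n) (k:=1) le_rfl (by omega)
  push_cast at s1; rw [mul_one] at s1
  have h : (π * (((n-2:ℕ):ℝ) + 1) / n) = π - π / n := by
    rw [show ((n-2:ℕ):ℝ) = (n:ℝ) - 2 by
      push_cast [Nat.cast_sub (by omega : 2 ≤ n)]; ring]
    field_simp
    ring
  rw [lgBeta, h, Real.sin_pi_sub, div_self s1.ne']

lemma lg_mid {n j : ℕ} (h1 : 2 ≤ j) (h2 : j ≤ n - 2) (hn : 3 ≤ n) :
    lgBeta n j = lgAlpha n j * lgBeta n (j-1) := by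
  have sj := lg_sin_pos (n := n) (k := j) (by omega) (by omega)
  have sj1 := lg_sin_pos (n := n) (k := j+1) (by omega) (by omega)
  rw [lgBeta, lgAlpha, lgBeta]
  rw [show ((j-1:ℕ):ℝ) = (j:ℝ) - 1 by push_cast [Nat.cast_sub (by omega : 1 ≤ j)]; ring]
  push_cast at sj sj1
  rw [show (j:ℝ) - 1 + 1 = (j:ℝ) by ring]
  field_simp

theorem lg_sos_decomposition (n d : ℕ) (hn : 3 ≤ n)
    (A : ℕ → Matrix (Fin d) (Fin d) ℂ)
    (hherm : ∀ x, 1 ≤ x → x ≤ n → (A x).IsHermitian)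
    (hinv : ∀ x, 1 ≤ x → x ≤ n → A x * A x = 1) :
    ∑ i ∈ Finset.Icc 1 (n - 2), ((1 / (2 * lgAlpha n i) : ℝ) : ℂ) •
        ((A i - ((lgAlpha n i : ℝ) : ℂ) • A (i + 1) + ((lgBeta n i : ℝ) : ℂ) • A n)ᴴ *
          (A i - ((lgAlpha n i : ℝ) : ℂ) • A (i + 1) + ((lgBeta n i : ℝ) : ℂ) • A n)) =
      (((1 / 2) * ∑ i ∈ Finset.Icc 1 (n - 2),
          (1 / lgAlpha n i + lgAlpha n i + (lgBeta n i) ^ 2 / lgAlpha n i) : ℝ) : ℂ) •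
          (1 : Matrix (Fin d) (Fin d) ℂ) -
        ((1 / 2 : ℂ) • ∑ x ∈ Finset.Icc 1 (n - 1), (A x * A (x + 1) + A (x + 1) * A x) -
          (1 / 2 : ℂ) • (A n * A 1 + A 1 * A n)) := by
  -- abbreviations
  set K : ℕ → ℕ → Matrix (Fin d) (Fin d) ℂ := fun x y => A x * A y + A y * A x with hK
  -- step 1: per-term expansion
  have hstep : ∀ i ∈ Finset.Icc 1 (n-2),
      ((1 / (2 * lgAlpha n i) : ℝ) : ℂ) •
        ((A i - ((lgAlpha n i : ℝ) : ℂ) • A (i + 1) + ((lgBeta n i : ℝ) : ℂ) • A n)ᴴ *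
          (A i - ((lgAlpha n i : ℝ) : ℂ) • A (i + 1) + ((lgBeta n i : ℝ) : ℂ) • A n)) =
      (((1/2) * (1 / lgAlpha n i + lgAlpha n i + (lgBeta n i)^2 / lgAlpha n i) : ℝ) : ℂ) • 1
        - (1/2 : ℂ) • K i (i+1)
        + (((lgBeta n i : ℝ) : ℂ)/(2*((lgAlpha n i : ℝ) : ℂ))) • K i n
        - (((lgBeta n i : ℝ) : ℂ)/2) • K (i+1) n := by
    intro i hi
    simp only [Finset.mem_Icc] at hi
    have hα : 0 < lgAlpha n i := lgAlpha_pos hi.1 (by omega)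
    have haC : ((lgAlpha n i : ℝ) : ℂ) ≠ 0 := by exact_mod_cast hα.ne'
    have hct : (A i - ((lgAlpha n i : ℝ) : ℂ) • A (i + 1) + ((lgBeta n i : ℝ) : ℂ) • A n)ᴴ
        = A i - ((lgAlpha n i : ℝ) : ℂ) • A (i + 1) + ((lgBeta n i : ℝ) : ℂ) • A n := by
      simp [conjTranspose_add, conjTranspose_sub, conjTranspose_smul,
        (hherm i hi.1 (by omega)).eq, (hherm (i+1) (by omega) (by omega)).eq,
        (hherm n (by omega) le_rfl).eq]
    rw [hct, show ((1 / (2 * lgAlpha n i) : ℝ) : ℂ) = 1/(2*((lgAlpha n i : ℝ) : ℂ)) by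
      push_cast; ring]
    rw [lg_key _ _ haC (A i) (A (i+1)) (A n) (hinv i hi.1 (by omega))
      (hinv (i+1) (by omega) (by omega)) (hinv n (by omega) le_rfl)]
    rw [show (((1/2) * (1 / lgAlpha n i + lgAlpha n i + (lgBeta n i)^2 / lgAlpha n i) : ℝ) : ℂ)
      = (1/(2*((lgAlpha n i : ℝ) : ℂ)))*(1 + ((lgAlpha n i : ℝ) : ℂ)^2 + ((lgBeta n i : ℝ) : ℂ)^2) by
      push_cast; field_simp]
  rw [Finset.sum_congr rfl hstep]
  -- split sums
  rw [Finset.sum_sub_distrib, Finset.sum_add_distrib, Finset.sum_sub_distrib, ← Finset.sum_smul,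
    ← Finset.smul_sum]
  -- constant part
  have hC : (∑ i ∈ Finset.Icc 1 (n-2),
      (((1/2) * (1 / lgAlpha n i + lgAlpha n i + (lgBeta n i)^2 / lgAlpha n i) : ℝ) : ℂ))
      = (((1 / 2) * ∑ i ∈ Finset.Icc 1 (n - 2),
          (1 / lgAlpha n i + lgAlpha n i + (lgBeta n i) ^ 2 / lgAlpha n i) : ℝ) : ℂ) := by
    push_cast
    rw [Finset.mul_sum]
  rw [hC]
  -- big sum over 1..n-1
  have hS : (∑ x ∈ Finset.Icc 1 (n - 1), (A x * A (x + 1) + A (x + 1) * A x))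
      = (∑ x ∈ Finset.Icc 1 (n - 2), K x (x+1)) + K (n-1) n := by
    rw [show Finset.Icc 1 (n-1) = insert (n-1) (Finset.Icc 1 (n-2)) by
      ext x; simp [Finset.mem_Icc]; omega]
    rw [Finset.sum_insert (by simp [Finset.mem_Icc]; omega)]
    rw [show n - 1 + 1 = n by omega]
    simp [hK]
    abel
  rw [hS]
  -- the two A_n coupled sums
  have hT2 : (∑ i ∈ Finset.Icc 1 (n-2),
      (((lgBeta n i : ℝ) : ℂ)/(2*((lgAlpha n i : ℝ) : ℂ))) • K i n)
      = (1/2 : ℂ) • K 1 n + ∑ j ∈ Finset.Icc 2 (n-2),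
          (((lgBeta n j : ℝ) : ℂ)/(2*((lgAlpha n j : ℝ) : ℂ))) • K j n := by
    rw [show Finset.Icc 1 (n-2) = insert 1 (Finset.Icc 2 (n-2)) by
      ext x; simp [Finset.mem_Icc]; omega]
    rw [Finset.sum_insert (by simp [Finset.mem_Icc])]
    congr 1
    have hα : 0 < lgAlpha n 1 := lgAlpha_pos le_rfl (by omega)
    have haC : ((lgAlpha n 1 : ℝ) : ℂ) ≠ 0 := by exact_mod_cast hα.ne'
    have : ((lgBeta n 1 : ℝ) : ℂ)/(2*((lgAlpha n 1 : ℝ) : ℂ)) = 1/2 := by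
      rw [lg_edge1]
      field_simp
    rw [this]
  have hT3 : (∑ i ∈ Finset.Icc 1 (n-2), (((lgBeta n i : ℝ) : ℂ)/2) • K (i+1) n)
      = (1/2 : ℂ) • K (n-1) n + ∑ j ∈ Finset.Icc 2 (n-2),
          (((lgBeta n (j-1) : ℝ) : ℂ)/2) • K j n := by
    have himg : Finset.Icc 2 (n-1) = (Finset.Icc 1 (n-2)).image (· + 1) := by
      rw [Finset.image_add_right_Icc]
      congr 1
      omega
    have hre : (∑ j ∈ Finset.Icc 2 (n-1), (((lgBeta n (j-1) : ℝ) : ℂ)/2) • K j n)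
        = ∑ i ∈ Finset.Icc 1 (n-2), (((lgBeta n i : ℝ) : ℂ)/2) • K (i+1) n := by
      rw [himg, Finset.sum_image (fun a _ b _ h => by omega)]
      simp
    rw [← hre, show Finset.Icc 2 (n-1) = insert (n-1) (Finset.Icc 2 (n-2)) by
      ext x; simp [Finset.mem_Icc]; omega]
    rw [Finset.sum_insert (by simp [Finset.mem_Icc]; omega)]
    congr 2
    rw [show n - 1 - 1 = n - 2 by omega, lg_edge2 hn]
    norm_num
  rw [hT2, hT3]
  -- middle sums agree
  have hmid : (∑ j ∈ Finset.Icc 2 (n-2),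
      (((lgBeta n j : ℝ) : ℂ)/(2*((lgAlpha n j : ℝ) : ℂ))) • K j n)
      = ∑ j ∈ Finset.Icc 2 (n-2), (((lgBeta n (j-1) : ℝ) : ℂ)/2) • K j n := by
    apply Finset.sum_congr rfl
    intro j hj
    simp only [Finset.mem_Icc] at hj
    congr 1
    have hα : 0 < lgAlpha n j := lgAlpha_pos (by omega) (by omega)
    have haC : ((lgAlpha n j : ℝ) : ℂ) ≠ 0 := by exact_mod_cast hα.ne'
    have := lg_mid hj.1 hj.2 hn
    have hcast : ((lgBeta n j : ℝ) : ℂ)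
        = ((lgAlpha n j : ℝ) : ℂ) * ((lgBeta n (j-1) : ℝ) : ℂ) := by
      exact_mod_cast congrArg (fun r : ℝ => (r : ℂ)) this
    rw [hcast]
    field_simp
  rw [hmid]
  -- final rearrangement
  have hK1 : K 1 n = K n 1 := by simp [hK]; abel
  rw [show (A n * A 1 + A 1 * A n) = K n 1 from rfl, ← hK1]
  module
end

section
/- Let n ≥ 3 and define the qubit observables Ã_x = cos(π(x−1)/n)·σ_z + sin(π(x−1)/n)·σ_x for x = 1,…,n, where σ_z and σ_x are the Pauli matrices. Then for every quantum state ρ on ℂ², the Leggett–Garg functional L = (1/2)∑_{x=1}^{n−1} Tr({Ã_x, Ã_{x+1}}ρ) − (1/2)Tr({Ã_n, Ã_1}ρ) equals n·cos(π/n), independently of ρ. -/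
open Real Finset Matrix ComplexOrder

def sigmaZ : Matrix (Fin 2) (Fin 2) ℂ := !![1, 0; 0, -1]
def sigmaX : Matrix (Fin 2) (Fin 2) ℂ := !![0, 1; 1, 0]

noncomputable def Atilde (n x : ℕ) : Matrix (Fin 2) (Fin 2) ℂ :=
  ((Real.cos (π * ((x : ℝ) - 1) / n) : ℝ) : ℂ) • sigmaZ +
    ((Real.sin (π * ((x : ℝ) - 1) / n) : ℝ) : ℂ) • sigmaX

lemma anticomm (θ φ : ℝ) :
    (((Real.cos θ : ℝ) : ℂ) • sigmaZ + ((Real.sin θ : ℝ) : ℂ) • sigmaX) *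
        (((Real.cos φ : ℝ) : ℂ) • sigmaZ + ((Real.sin φ : ℝ) : ℂ) • sigmaX) +
      (((Real.cos φ : ℝ) : ℂ) • sigmaZ + ((Real.sin φ : ℝ) : ℂ) • sigmaX) *
        (((Real.cos θ : ℝ) : ℂ) • sigmaZ + ((Real.sin θ : ℝ) : ℂ) • sigmaX) =
      ((2 * Real.cos (θ - φ) : ℝ) : ℂ) • 1 := by
  ext i j
  fin_cases i <;> fin_cases j <;>
    simp [sigmaZ, sigmaX, Matrix.mul_apply, Fin.sum_univ_two, Matrix.one_apply,
      Real.cos_sub] <;> push_cast <;> ring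

lemma anticomm_A (n x y : ℕ) :
    Atilde n x * Atilde n y + Atilde n y * Atilde n x =
      ((2 * Real.cos (π * ((x : ℝ) - 1) / n - π * ((y : ℝ) - 1) / n) : ℝ) : ℂ) • 1 := by
  exact anticomm _ _

theorem lg_state_independent_value (n : ℕ) (hn : 3 ≤ n)
    (ρ : Matrix (Fin 2) (Fin 2) ℂ) (hρ : ρ.PosSemidef) (hρtr : ρ.trace = 1) :
    (1 / 2 : ℂ) * ∑ x ∈ Finset.Icc 1 (n - 1),
        ((Atilde n x * Atilde n (x + 1) + Atilde n (x + 1) * Atilde n x) * ρ).trace -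
      (1 / 2 : ℂ) * ((Atilde n n * Atilde n 1 + Atilde n 1 * Atilde n n) * ρ).trace =
      ((n * Real.cos (π / n) : ℝ) : ℂ) := by
  have hn0 : (n : ℝ) ≠ 0 := by positivity
  have h1 : ∀ x ∈ Finset.Icc 1 (n - 1),
      ((Atilde n x * Atilde n (x + 1) + Atilde n (x + 1) * Atilde n x) * ρ).trace =
        ((2 * Real.cos (π / n) : ℝ) : ℂ) := by
    intro x _
    rw [anticomm_A, Matrix.smul_mul, Matrix.one_mul, Matrix.trace_smul, hρtr, smul_eq_mul,
      mul_one]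
    congr 2
    push_cast
    rw [show π * ((x : ℝ) - 1) / n - π * (((x : ℝ) + 1) - 1) / n = -(π / n) by field_simp; ring,
      Real.cos_neg]
  have h2 : ((Atilde n n * Atilde n 1 + Atilde n 1 * Atilde n n) * ρ).trace =
      ((2 * -Real.cos (π / n) : ℝ) : ℂ) := by
    rw [anticomm_A, Matrix.smul_mul, Matrix.one_mul, Matrix.trace_smul, hρtr, smul_eq_mul,
      mul_one]
    congr 2
    push_cast
    rw [show π * ((n : ℝ) - 1) / n - π * ((1 : ℝ) - 1 : ℝ) / n = π - π / n by field_simp; ring,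
      Real.cos_pi_sub]
  rw [Finset.sum_congr rfl h1, h2, Finset.sum_const, Nat.card_Icc]
  have hcard : n - 1 + 1 - 1 = n - 1 := by omega
  rw [hcard, nsmul_eq_mul]
  have hcast : ((n - 1 : ℕ) : ℂ) = (n : ℂ) - 1 := by
    push_cast [Nat.cast_sub (by omega : 1 ≤ n)]; ring
  rw [hcast]
  push_cast
  ring
end

section
/- Let M be a positive semidefinite operator on a finite-dimensional Hilbert space with M ≤ 1, and let U be a unitary such that U M = M U M. Then M is a projection (M² = M). -/
open Matrix ComplexOrder

theorem povm_element_is_projection (d : ℕ)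
    (M U : Matrix (Fin d) (Fin d) ℂ)
    (hM : M.PosSemidef) (hM1 : ((1 : Matrix (Fin d) (Fin d) ℂ) - M).PosSemidef)
    (hU : U ∈ Matrix.unitaryGroup (Fin d) ℂ)
    (heq : U * M = M * U * M) :
    M * M = M := by
  have key : (1 - M) * (U * M) = 0 := by
    rw [sub_mul, one_mul, ← mul_assoc, ← heq, sub_self]
  set f := Matrix.toLin' M with hf
  set u := Matrix.toLin' U with hu
  -- u is bijective
  have hUstar : Matrix.toLin' (star U) ∘ₗ u = LinearMap.id := by
    rw [hu, ← Matrix.toLin'_mul, (Matrix.mem_unitaryGroup_iff'.mp hU : star U * U = 1),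
      Matrix.toLin'_one]
  have hUstar' : u ∘ₗ Matrix.toLin' (star U) = LinearMap.id := by
    rw [hu, ← Matrix.toLin'_mul, (Matrix.mem_unitaryGroup_iff.mp hU : U * star U = 1),
      Matrix.toLin'_one]
  have hubij : Function.Bijective u := by
    constructor
    · exact Function.LeftInverse.injective
        (g := Matrix.toLin' (star U)) (fun x => by simpa using LinearMap.congr_fun hUstar x)
    · exact Function.RightInverse.surjective
        (g := Matrix.toLin' (star U)) (fun x => by simpa using LinearMap.congr_fun hUstar' x)
  -- the composition fact
  have hcomp : (LinearMap.id - f) ∘ₗ (u ∘ₗ f) = 0 := by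
    have : Matrix.toLin' ((1 - M) * (U * M)) = Matrix.toLin' (0 : Matrix (Fin d) (Fin d) ℂ) := by
      rw [key]
    simpa [Matrix.toLin'_mul, map_sub, Matrix.toLin'_one, map_zero] using this
  -- range (u ∘ f) ≤ ker (id - f)
  have hrange_le : LinearMap.range (u ∘ₗ f) ≤ LinearMap.ker (LinearMap.id - f) := by
    intro x hx
    obtain ⟨y, rfl⟩ := hx
    have := LinearMap.congr_fun hcomp y
    simpa [LinearMap.mem_ker] using this
  -- ker (id - f) ≤ range f
  have hker_le : LinearMap.ker (LinearMap.id - f) ≤ LinearMap.range f := by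
    intro x hx
    rw [LinearMap.mem_ker, LinearMap.sub_apply, LinearMap.id_apply, sub_eq_zero] at hx
    exact ⟨x, hx.symm⟩
  -- finrank range (u ∘ f) = finrank range f
  have hrank : Module.finrank ℂ (LinearMap.range (u ∘ₗ f))
      = Module.finrank ℂ (LinearMap.range f) := by
    rw [LinearMap.range_comp]
    exact LinearEquiv.finrank_map_eq (LinearEquiv.ofBijective u hubij) _
  -- conclude equality of submodules
  have hle : Module.finrank ℂ (LinearMap.range f)
      ≤ Module.finrank ℂ (LinearMap.ker (LinearMap.id - f)) := by
    rw [← hrank]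
    exact Submodule.finrank_mono hrange_le
  have heqsub : LinearMap.ker (LinearMap.id - f) = LinearMap.range f :=
    Submodule.eq_of_le_of_finrank_le hker_le hle
  -- M² = M
  have hff : f ∘ₗ f = f := LinearMap.ext fun x => by
    have hx : f x ∈ LinearMap.ker (LinearMap.id - f) := by
      rw [heqsub]; exact ⟨x, rfl⟩
    rw [LinearMap.mem_ker, LinearMap.sub_apply, LinearMap.id_apply, sub_eq_zero] at hx
    simpa using hx.symm
  have : Matrix.toLin' (M * M) = Matrix.toLin' M := by
    rw [Matrix.toLin'_mul, hf] at *
    exact hff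
  exact Matrix.toLin'.injective this
end

section
/- Let M_0, M_1 be positive semidefinite operators with M_0 + M_1 = 1 on a finite-dimensional Hilbert space, let U_0, U_1 be unitaries, and let ρ be a full-rank density matrix. If Tr(√M_a · U_a† M_b U_a · √M_a · ρ) = 0 whenever a ≠ b (a, b ∈ {0,1}), then √M_b · U_a · √M_a = 0 for a ≠ b, and consequently M_0 and M_1 are projections. -/
/-!
Write `X = √M_b U_a √M_a`. The Zeno condition says `Tr(Xᴴ X ρ) = 0`; since `Xᴴ X ⪰ 0` and
`ρ ≻ 0`, this forces `Xᴴ X = 0`, i.e. `X = 0`. Squaring the square roots gives `M_b U_a M_a = 0`,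
so `C = U_a† M_a U_a` satisfies `C M_a = M_a`. Since `C` has the same trace as `M_a`, this gives
`Tr(C M_b) = 0`, hence `C M_b = 0` and `C = C (M_a + M_b) = M_a`, so `M_a² = C M_a = M_a`.
-/

open Matrix ComplexOrder

/-- The positive semidefinite square root, as defined in the older Mathlib
(`Matrix.PosSemidef.sqrt`), which has since been removed. -/
noncomputable def Matrix.PosSemidef.sqrt {n 𝕜 : Type*} [Fintype n] [DecidableEq n] [RCLike 𝕜]
    {A : Matrix n n 𝕜} (hA : A.PosSemidef) : Matrix n n 𝕜 :=
  (hA.1.eigenvectorUnitary : Matrix n n 𝕜) *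
    diagonal ((RCLike.ofReal : ℝ → 𝕜) ∘ (√·) ∘ hA.1.eigenvalues) *
    (star hA.1.eigenvectorUnitary : Matrix n n 𝕜)

open scoped MatrixOrder

namespace Matrix

variable {m n 𝕜 : Type*} [Fintype m] [Fintype n] [DecidableEq n] [RCLike 𝕜]

theorem PosSemidef.sqrt_eq_cfcSqrt {A : Matrix n n 𝕜} (hA : A.PosSemidef) :
    hA.sqrt = CFC.sqrt A := by
  rw [CFC.sqrt_eq_cfc, cfc_nnreal_eq_real _ A, hA.1.cfc_eq, IsHermitian.cfc,
    Unitary.conjStarAlgAut_apply]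
  simp only [PosSemidef.sqrt, Real.sqrt]

theorem conjTranspose_cfcSqrt (A : Matrix n n 𝕜) : (CFC.sqrt A)ᴴ = CFC.sqrt A :=
  (CFC.sqrt_nonneg A).isSelfAdjoint.star_eq

theorem PosSemidef.trace_mul_eq_zero_iff {A B : Matrix n n 𝕜} (hA : A.PosSemidef)
    (hB : B.PosSemidef) : (A * B).trace = 0 ↔ A * B = 0 := by
  refine ⟨fun h ↦ ?_, fun h ↦ by rw [h, trace_zero]⟩
  set X := CFC.sqrt A * CFC.sqrt B
  have hXX : (Xᴴ * X).trace = (A * B).trace := by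
    rw [conjTranspose_mul, conjTranspose_cfcSqrt, conjTranspose_cfcSqrt]
    calc (CFC.sqrt B * CFC.sqrt A * (CFC.sqrt A * CFC.sqrt B)).trace
        = (CFC.sqrt A * CFC.sqrt A * (CFC.sqrt B * CFC.sqrt B)).trace := by
          rw [Matrix.mul_assoc, trace_mul_comm]; simp only [Matrix.mul_assoc]
      _ = (A * B).trace := by
          rw [CFC.sqrt_mul_sqrt_self A hA.nonneg, CFC.sqrt_mul_sqrt_self B hB.nonneg]
  have hX : X = 0 := trace_conjTranspose_mul_self_eq_zero_iff.1 (hXX.trans h)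
  calc A * B = CFC.sqrt A * CFC.sqrt A * (CFC.sqrt B * CFC.sqrt B) := by
        rw [CFC.sqrt_mul_sqrt_self A hA.nonneg, CFC.sqrt_mul_sqrt_self B hB.nonneg]
    _ = CFC.sqrt A * X * CFC.sqrt B := by simp only [X, Matrix.mul_assoc]
    _ = 0 := by rw [hX, Matrix.mul_zero, Matrix.zero_mul]

theorem eq_zero_of_trace_conjTranspose_mul_self_mul_eq_zero {X : Matrix m n 𝕜}
    {ρ : Matrix n n 𝕜} (hρ : ρ.PosDef) (h : (Xᴴ * X * ρ).trace = 0) : X = 0 := by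
  have hXXρ : Xᴴ * X * ρ = 0 :=
    ((posSemidef_conjTranspose_mul_self X).trace_mul_eq_zero_iff hρ.posSemidef).1 h
  exact conjTranspose_mul_self_eq_zero.1 (hρ.isUnit.mul_left_eq_zero.1 hXXρ)

theorem cfcSqrt_mul_mul_cfcSqrt_eq_zero_of_trace_eq_zero {M₀ M₁ U ρ : Matrix n n 𝕜}
    (hM₁ : M₁.PosSemidef) (hρ : ρ.PosDef)
    (h : (CFC.sqrt M₀ * (Uᴴ * M₁ * U) * CFC.sqrt M₀ * ρ).trace = 0) :
    CFC.sqrt M₁ * U * CFC.sqrt M₀ = 0 := by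
  set X := CFC.sqrt M₁ * U * CFC.sqrt M₀
  have hXX : Xᴴ * X = CFC.sqrt M₀ * (Uᴴ * M₁ * U) * CFC.sqrt M₀ := by
    calc Xᴴ * X
        = CFC.sqrt M₀ * (Uᴴ * (CFC.sqrt M₁ * CFC.sqrt M₁) * U) * CFC.sqrt M₀ := by
          simp only [X, conjTranspose_mul, conjTranspose_cfcSqrt, Matrix.mul_assoc]
      _ = CFC.sqrt M₀ * (Uᴴ * M₁ * U) * CFC.sqrt M₀ := by
          rw [CFC.sqrt_mul_sqrt_self M₁ hM₁.nonneg]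
  exact eq_zero_of_trace_conjTranspose_mul_self_mul_eq_zero hρ (hXX ▸ h)

theorem mul_mul_eq_zero_of_cfcSqrt_mul_mul_cfcSqrt_eq_zero {A B U : Matrix n n 𝕜}
    (hA : A.PosSemidef) (hB : B.PosSemidef) (h : CFC.sqrt A * U * CFC.sqrt B = 0) :
    A * U * B = 0 := by
  calc A * U * B = CFC.sqrt A * (CFC.sqrt A * U * CFC.sqrt B) * CFC.sqrt B := by
        conv_lhs =>
          rw [← CFC.sqrt_mul_sqrt_self A hA.nonneg, ← CFC.sqrt_mul_sqrt_self B hB.nonneg]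
        simp only [Matrix.mul_assoc]
    _ = 0 := by rw [h, Matrix.mul_zero, Matrix.zero_mul]

theorem isIdempotentElem_of_mul_mul_eq_zero {M₀ M₁ U : Matrix n n 𝕜}
    (hM₀ : M₀.PosSemidef) (hM₁ : M₁.PosSemidef) (hsum : M₀ + M₁ = 1)
    (hU : U ∈ unitaryGroup n 𝕜) (h : M₁ * U * M₀ = 0) : IsIdempotentElem M₀ := by
  have hM₁_eq : M₁ = 1 - M₀ := eq_sub_of_add_eq' hsum
  set C := star U * M₀ * U
  have hCM₀ : C * M₀ = M₀ := by
    have hUM₀ : M₀ * U * M₀ = U * M₀ := by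
      rw [hM₁_eq, Matrix.sub_mul, Matrix.sub_mul, Matrix.one_mul, sub_eq_zero] at h
      exact h.symm
    calc C * M₀ = star U * (M₀ * U * M₀) := by simp only [C, Matrix.mul_assoc]
      _ = M₀ := by
          rw [hUM₀, ← Matrix.mul_assoc, Unitary.star_mul_self_of_mem hU, Matrix.one_mul]
  have htrace_C : C.trace = M₀.trace := by
    rw [trace_mul_cycle, Unitary.mul_star_self_of_mem hU, Matrix.one_mul]
  have hCM₁ : C * M₁ = 0 := by
    have hC_psd : C.PosSemidef := hM₀.conjTranspose_mul_mul_same U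
    refine (hC_psd.trace_mul_eq_zero_iff hM₁).1 ?_
    rw [hM₁_eq, Matrix.mul_sub, Matrix.mul_one, trace_sub, hCM₀, htrace_C, sub_self]
  have hC : C = M₀ := by
    calc C = C * (M₀ + M₁) := by rw [hsum, Matrix.mul_one]
      _ = M₀ := by rw [Matrix.mul_add, hCM₀, hCM₁, add_zero]
  rwa [hC] at hCM₀

end Matrix

theorem zeno_forces_projective_general (d : ℕ)
    (M0 M1 : Matrix (Fin d) (Fin d) ℂ)
    (h0 : M0.PosSemidef) (h1 : M1.PosSemidef) (hsum : M0 + M1 = 1)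
    (U0 U1 : Matrix (Fin d) (Fin d) ℂ)
    (hU0 : U0 ∈ Matrix.unitaryGroup (Fin d) ℂ)
    (hU1 : U1 ∈ Matrix.unitaryGroup (Fin d) ℂ)
    (ρ : Matrix (Fin d) (Fin d) ℂ) (hρ : ρ.PosDef)
    (hz01 : (h0.sqrt * (U0ᴴ * M1 * U0) * h0.sqrt * ρ).trace = 0)
    (hz10 : (h1.sqrt * (U1ᴴ * M0 * U1) * h1.sqrt * ρ).trace = 0) :
    h1.sqrt * U0 * h0.sqrt = 0 ∧ h0.sqrt * U1 * h1.sqrt = 0 ∧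
      M0 * M0 = M0 ∧ M1 * M1 = M1 := by
  simp only [PosSemidef.sqrt_eq_cfcSqrt] at hz01 hz10 ⊢
  have h01 := cfcSqrt_mul_mul_cfcSqrt_eq_zero_of_trace_eq_zero h1 hρ hz01
  have h10 := cfcSqrt_mul_mul_cfcSqrt_eq_zero_of_trace_eq_zero h0 hρ hz10
  refine ⟨h01, h10, ?_, ?_⟩
  · exact isIdempotentElem_of_mul_mul_eq_zero h0 h1 hsum hU0
      (mul_mul_eq_zero_of_cfcSqrt_mul_mul_cfcSqrt_eq_zero h1 h0 h01)
  · exact isIdempotentElem_of_mul_mul_eq_zero h1 h0 ((add_comm M1 M0).trans hsum) hU1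
      (mul_mul_eq_zero_of_cfcSqrt_mul_mul_cfcSqrt_eq_zero h0 h1 h10)

theorem zeno_forces_projective (d : ℕ)
    (M0 M1 : Matrix (Fin d) (Fin d) ℂ)
    (h0 : M0.PosSemidef) (h1 : M1.PosSemidef) (hsum : M0 + M1 = 1)
    (U0 U1 : Matrix (Fin d) (Fin d) ℂ)
    (hU0 : U0 ∈ Matrix.unitaryGroup (Fin d) ℂ)
    (hU1 : U1 ∈ Matrix.unitaryGroup (Fin d) ℂ)
    (ρ : Matrix (Fin d) (Fin d) ℂ) (hρ : ρ.PosDef) (hρtr : ρ.trace = 1)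
    (hz01 : (h0.sqrt * (U0ᴴ * M1 * U0) * h0.sqrt * ρ).trace = 0)
    (hz10 : (h1.sqrt * (U1ᴴ * M0 * U1) * h1.sqrt * ρ).trace = 0) :
    h1.sqrt * U0 * h0.sqrt = 0 ∧ h0.sqrt * U1 * h1.sqrt = 0 ∧
      M0 * M0 = M0 ∧ M1 * M1 = M1 :=
  zeno_forces_projective_general d M0 M1 h0 h1 hsum U0 U1 hU0 hU1 ρ hρ hz01 hz10
end

section
/- Let P and Q be rank-one projections on ℂ² with Tr(PQ) = 1/2, and consider N alternating sequential projective measurements with projectors drawn from {P, 1−P} and {Q, 1−Q}. For any state ρ on ℂ² and any outcome sequence (a_1,…,a_N), the probability p(a_1,…,a_N) = Tr(Π_{a_1}Π_{a_2}⋯Π_{a_N}⋯Π_{a_2}Π_{a_1}ρ) equals p(a_1)·(1/2)^{N−1}, where p(a_1) = Tr(Π_{a_1}ρ). -/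
open Matrix ComplexOrder

/-- `seqProd Pi N = Pi (N-1) * ⋯ * Pi 1 * Pi 0`. -/
noncomputable def seqProd (Pi : ℕ → Matrix (Fin 2) (Fin 2) ℂ) : ℕ → Matrix (Fin 2) (Fin 2) ℂ
  | 0 => 1
  | k + 1 => Pi k * seqProd Pi k

lemma rank_one_sandwich (E X : Matrix (Fin 2) (Fin 2) ℂ)
    (htr : E.trace = 1) (h2 : E * E = E) :
    E * X * E = (E * X).trace • E := by
  have htr' : E 0 0 + E 1 1 = 1 := by
    simpa [Matrix.trace, Fin.sum_univ_two] using htr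
  have hdet : E 0 1 * E 1 0 = E 0 0 * E 1 1 := by
    have h00 : E 0 0 * E 0 0 + E 0 1 * E 1 0 = E 0 0 := by
      have := congrFun (congrFun h2 0) 0
      simpa [Matrix.mul_apply, Fin.sum_univ_two] using this
    linear_combination h00 - E 0 0 * htr'
  ext i j
  fin_cases i <;> fin_cases j <;>
    simp only [Matrix.mul_apply, Matrix.trace, Matrix.diag_apply, Fin.sum_univ_two,
      Matrix.smul_apply, smul_eq_mul, Fin.isValue, Fin.mk_zero, Fin.mk_one] <;>
    first
      | linear_combination (X 1 1) * hdet
      | linear_combination (X 0 0) * hdet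
      | linear_combination (X 0 1) * hdet
      | linear_combination (X 1 0) * hdet
      | linear_combination (-X 1 1) * hdet
      | linear_combination (-X 0 0) * hdet
      | linear_combination (-X 0 1) * hdet
      | linear_combination (-X 1 0) * hdet

theorem sequential_mub_probability (N : ℕ) (hN : 1 ≤ N)
    (P Q : Matrix (Fin 2) (Fin 2) ℂ)
    (hPh : P.IsHermitian) (hQh : Q.IsHermitian)
    (hP2 : P * P = P) (hQ2 : Q * Q = Q)
    (hPtr : P.trace = 1) (hQtr : Q.trace = 1)
    (hPQ : (P * Q).trace = 1 / 2)
    (ρ : Matrix (Fin 2) (Fin 2) ℂ) (hρ : ρ.PosSemidef) (hρtr : ρ.trace = 1)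
    (a : ℕ → Bool) (Pi : ℕ → Matrix (Fin 2) (Fin 2) ℂ)
    (hPi : ∀ k, Pi k =
      if k % 2 = 0 then (if a k then P else 1 - P) else (if a k then Q else 1 - Q)) :
    ((seqProd Pi N)ᴴ * seqProd Pi N * ρ).trace =
      (Pi 0 * ρ).trace * (1 / 2 : ℂ) ^ (N - 1) := by
  have hPh' : Pᴴ = P := hPh
  have hQh' : Qᴴ = Q := hQh
  have h1tr : (1 : Matrix (Fin 2) (Fin 2) ℂ).trace = 2 := by
    simp [Matrix.trace_one]
  have hPiH : ∀ k, (Pi k)ᴴ = Pi k := by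
    intro k
    rw [hPi k]
    split_ifs <;> simp [hPh', hQh']
  have hPi2 : ∀ k, Pi k * Pi k = Pi k := by
    intro k
    rw [hPi k]
    have hC : ∀ R : Matrix (Fin 2) (Fin 2) ℂ, R * R = R → (1 - R) * (1 - R) = 1 - R := by
      intro R hR
      rw [sub_mul, one_mul, mul_sub, mul_one, hR]
      abel
    split_ifs <;> simp [hP2, hQ2, hC P hP2, hC Q hQ2]
  have hPitr : ∀ k, (Pi k).trace = 1 := by
    intro k
    rw [hPi k]
    split_ifs <;> simp [Matrix.trace_sub, h1tr, hPtr, hQtr] <;> norm_num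
  have hcons : ∀ k, (Pi k * Pi (k + 1)).trace = 1 / 2 := by
    intro k
    have hEF : ∀ E F : Matrix (Fin 2) (Fin 2) ℂ,
        (E ∈ ({P, 1 - P} : Set _)) → (F ∈ ({Q, 1 - Q} : Set _)) →
        (E * F).trace = 1 / 2 := by
      rintro E F (rfl | rfl) (rfl | rfl) <;>
        simp only [mul_sub, sub_mul, mul_one, one_mul, Matrix.trace_sub, hPQ, hPtr, hQtr,
          h1tr] <;> ring
    have hFE : ∀ E F : Matrix (Fin 2) (Fin 2) ℂ,
        (E ∈ ({P, 1 - P} : Set _)) → (F ∈ ({Q, 1 - Q} : Set _)) →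
        (F * E).trace = 1 / 2 := by
      intro E F hE hF
      rw [Matrix.trace_mul_comm]
      exact hEF E F hE hF
    rcases Nat.even_or_odd k with hk | hk
    · have h0 : k % 2 = 0 := Nat.even_iff.mp hk
      rw [hPi k, hPi (k + 1), if_pos h0, if_neg (by omega : ¬ (k + 1) % 2 = 0)]
      apply hEF <;> split_ifs <;> simp [Set.mem_insert_iff]
    · have h0 : k % 2 = 1 := Nat.odd_iff.mp hk
      rw [hPi k, hPi (k + 1), if_neg (by omega : ¬ k % 2 = 0), if_pos (by omega : (k + 1) % 2 = 0)]
      apply hFE <;> split_ifs <;> simp [Set.mem_insert_iff]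
  have main : ∀ n, (seqProd Pi (n + 1))ᴴ * seqProd Pi (n + 1) = ((1 / 2 : ℂ)) ^ n • Pi 0 := by
    intro n
    induction n with
    | zero =>
      simp [seqProd, hPiH 0, hPi2 0]
    | succ m ih =>
      have e2 : seqProd Pi (m + 1 + 1) = Pi (m + 1) * seqProd Pi (m + 1) := rfl
      have e1 : seqProd Pi (m + 1) = Pi m * seqProd Pi m := rfl
      set A := seqProd Pi m with hA
      have step : (seqProd Pi (m + 1 + 1))ᴴ * seqProd Pi (m + 1 + 1)
          = (1 / 2 : ℂ) • ((seqProd Pi (m + 1))ᴴ * seqProd Pi (m + 1)) := by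
        calc (seqProd Pi (m + 1 + 1))ᴴ * seqProd Pi (m + 1 + 1)
            = (seqProd Pi (m + 1))ᴴ * (Pi (m + 1) * Pi (m + 1)) * seqProd Pi (m + 1) := by
              rw [e2, Matrix.conjTranspose_mul, hPiH]; noncomm_ring
          _ = (seqProd Pi (m + 1))ᴴ * Pi (m + 1) * seqProd Pi (m + 1) := by rw [hPi2 (m + 1)]
          _ = Aᴴ * (Pi m * Pi (m + 1) * Pi m) * A := by
              rw [e1, Matrix.conjTranspose_mul, hPiH]; noncomm_ring
          _ = (1 / 2 : ℂ) • (Aᴴ * Pi m * A) := by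
              rw [rank_one_sandwich _ _ (hPitr m) (hPi2 m), hcons m]
              simp [Matrix.mul_smul, Matrix.smul_mul]
          _ = (1 / 2 : ℂ) • (Aᴴ * (Pi m * Pi m) * A) := by rw [hPi2 m]
          _ = (1 / 2 : ℂ) • ((seqProd Pi (m + 1))ᴴ * seqProd Pi (m + 1)) := by
              rw [e1, Matrix.conjTranspose_mul, hPiH]; congr 1; noncomm_ring
      rw [step, ih, smul_smul, ← pow_succ']
  obtain ⟨n, rfl⟩ : ∃ n, N = n + 1 := ⟨N - 1, by omega⟩
  rw [main n]
  simp [Matrix.smul_mul, Matrix.trace_smul, mul_comm]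
end
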